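/- arXiv:0906.5406 — 6 statements merged into one kernel-verified Lean document; each statement's English description precedes it below -/
import Mathlib

section
/- Let A be a linear relation in a Hilbert space H. Then H = dom A** + ran A* and H = ran A** + dom A* (as sums of, not necessarily closed, subspaces). -/
open scoped ComplexInnerProductSpace

variable {H : Type*} [NormedAddCommGroup H] [InnerProductSpace ℂ H] [CompleteSpace H]

/-- The adjoint of a linear relation (given as a set of pairs). -/
def adjRel (S : Set (H × H)) : Set (H × H) :=
  {p | ∀ q ∈ S, ⟪p.2, q.1⟫ = ⟪p.1, q.2⟫}

/-- The domain of a linear relation. -/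
def domRel (S : Set (H × H)) : Set H := {f | ∃ g, (f, g) ∈ S}

/-- The range of a linear relation. -/
def ranRel (S : Set (H × H)) : Set H := {g | ∃ f, (f, g) ∈ S}

/-- The multivalued part of a linear relation. -/
def mulRel (S : Set (H × H)) : Set H := {g | (0, g) ∈ S}

/-- The kernel of a linear relation. -/
def kerRel (S : Set (H × H)) : Set H := {f | (f, 0) ∈ S}

/-- The operatorwise sum of two linear relations. -/
def opSum (S T : Set (H × H)) : Set (H × H) :=
  {p | ∃ g h, (p.1, g) ∈ S ∧ (p.1, h) ∈ T ∧ p.2 = g + h}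

/-- The product (composition) S ∘ T of two linear relations: apply T first, then S. -/
def relComp (S T : Set (H × H)) : Set (H × H) :=
  {p | ∃ h, (p.1, h) ∈ T ∧ (h, p.2) ∈ S}

/-- The numerical range of a linear relation. -/
def numRange (S : Set (H × H)) : Set ℂ :=
  {z | ∃ p ∈ S, ‖p.1‖ = 1 ∧ z = ⟪p.2, p.1⟫}


/-!
The graph of `A**` contains the closure of `A`, and the graph of `A*` is the image of the
orthogonal complement of `A` in `H × H` (with the product inner product) under the rotation
`(a, b) ↦ (-b, a)`. Decomposing `(h, 0)` and `(0, h)` along `H × H = closure A ⊕ Aᗮ` and reading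
off one coordinate gives the two sums.
-/

omit [CompleteSpace H] in
lemma isClosed_adjRel (T : Set (H × H)) : IsClosed (adjRel T) := by
  simp only [adjRel, Set.ofPred_forall]
  exact isClosed_biInter fun q _ =>
    isClosed_eq (continuous_snd.inner continuous_const) (continuous_fst.inner continuous_const)

omit [CompleteSpace H] in
lemma subset_adjRel_adjRel (S : Set (H × H)) : S ⊆ adjRel (adjRel S) := fun p hp q hq => by
  rw [← inner_conj_symm p.2 q.1, ← hq p hp, inner_conj_symm]

omit [CompleteSpace H] in
lemma closure_subset_adjRel_adjRel (S : Set (H × H)) : closure S ⊆ adjRel (adjRel S) :=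
  (isClosed_adjRel _).closure_subset_iff.2 (subset_adjRel_adjRel S)

omit [CompleteSpace H] in
lemma neg_snd_fst_mem_adjRel {S : Set (H × H)} {m : H × H}
    (hm : ∀ q ∈ S, ⟪m.1, q.1⟫ + ⟪m.2, q.2⟫ = 0) : (-m.2, m.1) ∈ adjRel S := fun q hq => by
  rw [inner_neg_left]
  linear_combination hm q hq

omit [CompleteSpace H] in
lemma snd_neg_fst_mem_adjRel {S : Set (H × H)} {m : H × H}
    (hm : ∀ q ∈ S, ⟪m.1, q.1⟫ + ⟪m.2, q.2⟫ = 0) : (m.2, -m.1) ∈ adjRel S := fun q hq => by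
  rw [inner_neg_left]
  linear_combination -hm q hq

lemma exists_mem_closure_add_orthogonal (A : Submodule ℂ (H × H)) (x : H × H) :
    ∃ k ∈ closure (A : Set (H × H)), ∃ m : H × H,
      (∀ q ∈ A, ⟪m.1, q.1⟫ + ⟪m.2, q.2⟫ = 0) ∧ x = k + m := by
  let e : WithLp 2 (H × H) ≃L[ℂ] H × H := WithLp.prodContinuousLinearEquiv 2 ℂ H H
  let Aw := A.comap (e : WithLp 2 (H × H) →ₗ[ℂ] H × H)
  let K := Aw.topologicalClosure
  have : CompleteSpace K := Aw.isClosed_topologicalClosure.completeSpace_coe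
  obtain ⟨y, hy, z, hz, hxyz⟩ := K.exists_add_mem_mem_orthogonal (e.symm x)
  refine ⟨e y, map_mem_closure e.continuous hy fun a ha => ha, e z, fun q hq => ?_, ?_⟩
  · exact K.inner_left_of_mem_orthogonal (Aw.le_topologicalClosure (by simpa [Aw, e] using hq)) hz
  · rw [← map_add, ← hxyz, e.apply_symm_apply]

/-- H = dom A** + ran A* and H = ran A** + dom A*. -/
theorem stmt5 (A : Submodule ℂ (H × H)) :
    (∀ h : H, ∃ u ∈ domRel (adjRel (adjRel (A : Set (H × H)))),
       ∃ v ∈ ranRel (adjRel (A : Set (H × H))), h = u + v) ∧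
    (∀ h : H, ∃ u ∈ ranRel (adjRel (adjRel (A : Set (H × H)))),
       ∃ v ∈ domRel (adjRel (A : Set (H × H))), h = u + v) := by
  constructor
  · intro h
    obtain ⟨k, hk, m, hm, hx⟩ := exists_mem_closure_add_orthogonal A (h, 0)
    exact ⟨k.1, ⟨k.2, closure_subset_adjRel_adjRel _ hk⟩, m.1, ⟨-m.2, neg_snd_fst_mem_adjRel hm⟩,
      congrArg Prod.fst hx⟩
  · intro h
    obtain ⟨k, hk, m, hm, hx⟩ := exists_mem_closure_add_orthogonal A (0, h)
    exact ⟨k.2, ⟨k.1, closure_subset_adjRel_adjRel _ hk⟩, m.2, ⟨-m.1, snd_neg_fst_mem_adjRel hm⟩,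
      congrArg Prod.snd hx⟩
end

section
/- Let A and B be closed linear relations in a Hilbert space H. Then the componentwise sum A ∔ B is closed in H × H if and only if A* ∔ B* is closed in H × H. -/
open scoped ComplexInnerProductSpace

variable {H : Type*} [NormedAddCommGroup H] [InnerProductSpace ℂ H] [CompleteSpace H]

/-! If `M + N` is closed, then `(M ⊓ N)ᗮ = Mᗮ + Nᗮ`: for `x ⊥ M ⊓ N` the functional
`m + n ↦ ⟪x, n⟫` is well defined on `M + N` and bounded by the open mapping theorem, and its Riesz
representative `y` splits `x = y + (x - y)` with `y ⊥ M` and `x - y ⊥ N`. Applied to `Mᗮ, Nᗮ` this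
gives the converse, so `M + N` is closed iff `Mᗮ + Nᗮ` is. Finally `A* = J (Aᗮ)` with `J` unitary,
so `A* ∔ B* = J (Aᗮ + Bᗮ)` is closed iff `Aᗮ + Bᗮ` is. -/

theorem Submodule.setOf_exists_add_eq {R M : Type*} [Semiring R] [AddCommMonoid M] [Module R M]
    (p q : Submodule R M) :
    {x | ∃ u ∈ (p : Set M), ∃ v ∈ (q : Set M), x = u + v} = ((p ⊔ q : Submodule R M) : Set M) := by
  ext x
  simp [Submodule.mem_sup, eq_comm]

theorem ContinuousLinearEquiv.isClosed_comap_sup_iff {R M M₂ : Type*} [Semiring R]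
    [AddCommMonoid M] [AddCommMonoid M₂] [Module R M] [Module R M₂] [TopologicalSpace M]
    [TopologicalSpace M₂] (e : M ≃L[R] M₂) (p q : Submodule R M₂) :
    IsClosed ((p.comap (e : M →ₗ[R] M₂) ⊔ q.comap (e : M →ₗ[R] M₂) : Submodule R M) : Set M) ↔
      IsClosed ((p ⊔ q : Submodule R M₂) : Set M₂) := by
  rw [← Submodule.comap_sup_of_injective e.injective (by simp) (by simp), Submodule.comap_coe]
  exact e.toHomeomorph.isClosed_preimage

namespace Submodule

variable {K : Type*} [NormedAddCommGroup K] [InnerProductSpace ℂ K] [CompleteSpace K]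
  {M N : Submodule ℂ K}

theorem exists_add_eq_norm_le_of_isClosed_sup (hM : IsClosed (M : Set K))
    (hN : IsClosed (N : Set K)) (h : IsClosed ((M ⊔ N : Submodule ℂ K) : Set K)) :
    ∃ C, ∀ z ∈ M ⊔ N, ∃ m ∈ M, ∃ n ∈ N, m + n = z ∧ ‖n‖ ≤ C * ‖z‖ := by
  have := hM.completeSpace_coe
  have := hN.completeSpace_coe
  have := h.completeSpace_coe
  let T : (M × N) →L[ℂ] (M ⊔ N : Submodule ℂ K) :=
    (M.subtypeL.coprod N.subtypeL).codRestrict (M ⊔ N)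
      fun p => add_mem (mem_sup_left p.1.2) (mem_sup_right p.2.2)
  have hT : Function.Surjective T := by
    rintro ⟨z, hz⟩
    obtain ⟨m, hm, n, hn, rfl⟩ := mem_sup.mp hz
    exact ⟨(⟨m, hm⟩, ⟨n, hn⟩), rfl⟩
  obtain ⟨C, -, hC⟩ := T.exists_preimage_norm_le hT
  refine ⟨C, fun z hz => ?_⟩
  obtain ⟨⟨m, n⟩, hmn, hle⟩ := hC ⟨z, hz⟩
  exact ⟨m, m.2, n, n.2, congrArg Subtype.val hmn, (norm_snd_le _).trans hle⟩

theorem orthogonal_inf_le_sup_orthogonal (hM : IsClosed (M : Set K))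
    (hN : IsClosed (N : Set K)) (h : IsClosed ((M ⊔ N : Submodule ℂ K) : Set K)) :
    (M ⊓ N)ᗮ ≤ Mᗮ ⊔ Nᗮ := by
  intro x hx
  have := h.completeSpace_coe
  obtain ⟨C, hC⟩ := exists_add_eq_norm_le_of_isClosed_sup hM hN h
  -- `φ (m + n) = ⟪x, n⟫` is well defined on `M ⊔ N` because `x ⊥ M ⊓ N`
  obtain ⟨φ, hφ⟩ : ∃ φ : ↥(M ⊔ N) →ₗ[ℂ] ℂ,
      ∀ (m : M) (n : N) (z : ↥(M ⊔ N)), (m : K) + n = z → φ z = ⟪x, (n : K)⟫ :=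
    ⟨_, fun m n z hz => (LinearPMap.sup_apply (f := ⟨M, 0⟩)
      (g := ⟨N, (innerₛₗ ℂ x).domRestrict N⟩) (fun m n hmn => show (0 : ℂ) = ⟪x, (n : K)⟫ from
        (inner_left_of_mem_orthogonal (mem_inf.mpr ⟨hmn ▸ m.2, n.2⟩) hx).symm) m n z hz).trans
      (zero_add _)⟩
  have hbound : ∀ z, ‖φ z‖ ≤ C * ‖x‖ * ‖z‖ := by
    intro z
    obtain ⟨m, hm, n, hn, hmn, hle⟩ := hC z z.2
    rw [hφ ⟨m, hm⟩ ⟨n, hn⟩ z hmn]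
    calc ‖⟪x, n⟫‖ ≤ ‖x‖ * ‖n‖ := norm_inner_le_norm x n
      _ ≤ ‖x‖ * (C * ‖z‖) := by gcongr; exact hle
      _ = C * ‖x‖ * ‖z‖ := by ring
  obtain ⟨y, hy⟩ : ∃ y : K, ∀ z : ↥(M ⊔ N), ⟪y, (z : K)⟫ = φ z :=
    ⟨_, fun z => ((M ⊔ N).coe_inner _ _).symm.trans
      (InnerProductSpace.toDual_symm_apply (y := φ.mkContinuous _ hbound))⟩
  refine mem_sup.mpr ⟨y, ?_, x - y, ?_, add_sub_cancel y x⟩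
  · rw [mem_orthogonal']
    intro m hm
    rw [hy ⟨m, mem_sup_left hm⟩, hφ ⟨m, hm⟩ 0 _ (add_zero m)]
    simp
  · rw [mem_orthogonal']
    intro n hn
    rw [inner_sub_left, hy ⟨n, mem_sup_right hn⟩, hφ 0 ⟨n, hn⟩ _ (zero_add n), sub_self]

theorem isClosed_sup_orthogonal_of_isClosed_sup (hM : IsClosed (M : Set K))
    (hN : IsClosed (N : Set K)) (h : IsClosed ((M ⊔ N : Submodule ℂ K) : Set K)) :
    IsClosed ((Mᗮ ⊔ Nᗮ : Submodule ℂ K) : Set K) := by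
  rw [le_antisymm (sup_le (orthogonal_le inf_le_left) (orthogonal_le inf_le_right))
    (orthogonal_inf_le_sup_orthogonal hM hN h)]
  exact isClosed_orthogonal _

theorem isClosed_sup_iff_isClosed_sup_orthogonal (hM : IsClosed (M : Set K))
    (hN : IsClosed (N : Set K)) :
    IsClosed ((M ⊔ N : Submodule ℂ K) : Set K) ↔
      IsClosed ((Mᗮ ⊔ Nᗮ : Submodule ℂ K) : Set K) := by
  refine ⟨isClosed_sup_orthogonal_of_isClosed_sup hM hN, fun h => ?_⟩
  have := hM.completeSpace_coe
  have := hN.completeSpace_coe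
  simpa only [orthogonal_orthogonal] using
    isClosed_sup_orthogonal_of_isClosed_sup (isClosed_orthogonal M) (isClosed_orthogonal N) h

end Submodule

section ProdL2

variable {E : Type*} [NormedAddCommGroup E] [InnerProductSpace ℂ E]

/-- The map `J (f, g) = (g, -f)`, with values in `E × E` carrying the ℓ² inner product. -/
noncomputable def rotL2 : (E × E) ≃L[ℂ] WithLp 2 (E × E) :=
  ((ContinuousLinearEquiv.prodComm ℂ E E).trans
    ((ContinuousLinearEquiv.refl ℂ E).prodCongr (ContinuousLinearEquiv.neg ℂ))).trans
    (WithLp.prodContinuousLinearEquiv 2 ℂ E E).symm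

/-- The adjoint `J (Sᗮ)` of a linear relation, with `Sᗮ` taken in `WithLp 2 (E × E)`. -/
noncomputable def adjointRel (S : Submodule ℂ (E × E)) : Submodule ℂ (E × E) :=
  (Submodule.orthogonal
    (S.comap (WithLp.prodContinuousLinearEquiv 2 ℂ E E : WithLp 2 (E × E) →ₗ[ℂ] E × E))).comap
    (rotL2 (E := E) : E × E →ₗ[ℂ] WithLp 2 (E × E))

theorem inner_rotL2 (p : E × E) (u : WithLp 2 (E × E)) :
    ⟪rotL2 p, u⟫ = ⟪p.2, u.fst⟫ - ⟪p.1, u.snd⟫ := by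
  simp [rotL2, WithLp.prod_inner_apply, sub_eq_add_neg]

theorem coe_adjointRel (S : Submodule ℂ (E × E)) :
    (adjointRel S : Set (E × E)) = adjRel (S : Set (E × E)) := by
  ext p
  simp only [adjointRel, SetLike.mem_coe, Submodule.mem_comap, Submodule.mem_orthogonal',
    LinearEquiv.coe_coe, ContinuousLinearEquiv.coe_toLinearEquiv, inner_rotL2, sub_eq_zero]
  exact ⟨fun h q hq => h (WithLp.toLp 2 q) hq, fun h u hu => h u.ofLp hu⟩

end ProdL2

/-- For closed relations A, B: A ∔ B is closed iff A* ∔ B* is closed. -/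
theorem stmt9 (A B : Submodule ℂ (H × H))
    (hA : IsClosed (A : Set (H × H))) (hB : IsClosed (B : Set (H × H))) :
    IsClosed ((A ⊔ B : Submodule ℂ (H × H)) : Set (H × H)) ↔
    IsClosed {p : H × H | ∃ u ∈ adjRel (A : Set (H × H)),
      ∃ v ∈ adjRel (B : Set (H × H)), p = u + v} := by
  set e := WithLp.prodContinuousLinearEquiv 2 ℂ H H
  rw [← coe_adjointRel, ← coe_adjointRel, Submodule.setOf_exists_add_eq, adjointRel, adjointRel,
    ContinuousLinearEquiv.isClosed_comap_sup_iff, ← e.isClosed_comap_sup_iff]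
  exact Submodule.isClosed_sup_iff_isClosed_sup_orthogonal (hA.preimage e.continuous)
    (hB.preimage e.continuous)
end

section
/- Let A be a closed linear relation in a Hilbert space H. Then dom A is closed if and only if dom A* is closed; and ran A is closed if and only if ran A* is closed. -/
open scoped ComplexInnerProductSpace

variable {H : Type*} [NormedAddCommGroup H] [InnerProductSpace ℂ H] [CompleteSpace H]

/-! Viewing `A` as a closed subspace `M` of the Hilbert sum `H ⊕ H`, a pair `(f, f')` lies in `A*`
iff `(f', -f) ∈ Mᗮ`, so `dom A*` and `ran A*` are the coordinate projections of `Mᗮ`.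
The projection of `M` along a coordinate is closed iff `M + ker π` is closed (open mapping
theorem), and the two coordinate kernels are orthogonal complements of each other. It remains to
see that `U + V` is closed iff `Uᗮ + Vᗮ` is, for closed subspaces `U`, `V`: since
`U + V = P⁻¹(P V)` for the orthogonal projection `P` onto `Uᗮ`, this says that `P` restricted to
`V` has closed range, and its adjoint is the projection onto `V` restricted to `Uᗮ`, so the
closed range theorem applies. That theorem in turn reduces to surjective operators, whose adjoints
are bounded below by the open mapping theorem. -/

open Function Set ContinuousLinearMap
open scoped InnerProduct InnerProductSpace

section ClosedRange

variable {𝕜 E F : Type*} [RCLike 𝕜]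
  [NormedAddCommGroup E] [InnerProductSpace 𝕜 E] [CompleteSpace E]
  [NormedAddCommGroup F] [InnerProductSpace 𝕜 F] [CompleteSpace F]

theorem ContinuousLinearMap.isClosed_range_adjoint_of_surjective (T : E →L[𝕜] F)
    (hT : Surjective T) : IsClosed (range (T†)) := by
  obtain ⟨C, hC, hpre⟩ := T.exists_preimage_norm_le hT
  have bound : ∀ y, ‖y‖ ≤ C * ‖(T†) y‖ := by
    intro y
    obtain ⟨x, rfl, hx⟩ := hpre y
    have key : ‖T x‖ * ‖T x‖ ≤ ‖(T†) (T x)‖ * (C * ‖T x‖) :=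
      calc ‖T x‖ * ‖T x‖ = RCLike.re ⟪(T†) (T x), x⟫_𝕜 := by
              rw [adjoint_inner_left, inner_self_eq_norm_mul_norm]
        _ ≤ ‖(T†) (T x)‖ * ‖x‖ := (RCLike.re_le_norm _).trans (norm_inner_le_norm _ _)
        _ ≤ ‖(T†) (T x)‖ * (C * ‖T x‖) := by gcongr
    rcases (norm_nonneg (T x)).eq_or_lt with h | h
    · rw [← h]; positivity
    · nlinarith
  exact ((T†).antilipschitz_of_bound (K := ⟨C, hC.le⟩) bound).isClosed_range
    (T†).uniformContinuous

theorem ContinuousLinearMap.isClosed_range_adjoint_of_isClosed_range (T : E →L[𝕜] F)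
    (h : IsClosed (range T)) : IsClosed (range (T†)) := by
  set R := LinearMap.range (T : E →ₗ[𝕜] F)
  have hR : IsClosed (R : Set F) := by rwa [LinearMap.coe_range, coe_coe]
  have : CompleteSpace R := hR.completeSpace_coe
  have hT : T† = T.rangeRestrict† ∘L R.orthogonalProjectionOnto := by
    rw [← Submodule.adjoint_subtypeL, ← adjoint_comp]
    rfl
  have hP : Surjective R.orthogonalProjectionOnto := fun v =>
    ⟨v, Submodule.orthogonalProjectionOnto_mem_subspace_eq_self v⟩
  rw [hT, coe_comp, hP.range_comp]
  exact T.rangeRestrict.isClosed_range_adjoint_of_surjective rangeFactorization_surjective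

theorem ContinuousLinearMap.isClosed_range_adjoint_iff (T : E →L[𝕜] F) :
    IsClosed (range (T†)) ↔ IsClosed (range T) := by
  refine ⟨fun h => ?_, T.isClosed_range_adjoint_of_isClosed_range⟩
  simpa using (T†).isClosed_range_adjoint_of_isClosed_range h

end ClosedRange

theorem ContinuousLinearMap.isClosed_map_iff_isClosed_sup_ker {𝕜 E F : Type*}
    [NontriviallyNormedField 𝕜] [NormedAddCommGroup E] [NormedSpace 𝕜 E] [CompleteSpace E]
    [NormedAddCommGroup F] [NormedSpace 𝕜 F] [CompleteSpace F]
    (f : E →L[𝕜] F) (hf : Surjective f) (p : Submodule 𝕜 E) :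
    IsClosed (p.map (f : E →ₗ[𝕜] F) : Set F) ↔
      IsClosed ((p ⊔ LinearMap.ker (f : E →ₗ[𝕜] F) : Submodule 𝕜 E) : Set E) := by
  rw [← Submodule.comap_map_eq, Submodule.comap_coe]
  exact (f.isQuotientMap hf).isCoinducing.isClosed_preimage.symm

section Orthogonal

variable {𝕜 E F G : Type*} [RCLike 𝕜]
  [NormedAddCommGroup E] [InnerProductSpace 𝕜 E] [CompleteSpace E]
  [NormedAddCommGroup F] [InnerProductSpace 𝕜 F] [CompleteSpace F]
  [NormedAddCommGroup G] [InnerProductSpace 𝕜 G] [CompleteSpace G]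

theorem Submodule.isClosed_sup_orthogonal_iff_isClosed_range (W V : Submodule 𝕜 E)
    [CompleteSpace W] :
    IsClosed ((V ⊔ Wᗮ : Submodule 𝕜 E) : Set E) ↔
      IsClosed (range (W.orthogonalProjectionOnto ∘L V.subtypeL)) := by
  have hP : Surjective W.orthogonalProjectionOnto := fun w =>
    ⟨w, orthogonalProjectionOnto_mem_subspace_eq_self w⟩
  rw [← ker_orthogonalProjectionOnto, ← isClosed_map_iff_isClosed_sup_ker _ hP, coe_comp,
    range_comp, coe_subtypeL, coe_subtype, Subtype.range_coe]
  rfl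

theorem Submodule.isClosed_sup_iff_isClosed_orthogonal_sup_orthogonal (U V : Submodule 𝕜 E)
    [CompleteSpace U] [CompleteSpace V] :
    IsClosed ((U ⊔ V : Submodule 𝕜 E) : Set E) ↔
      IsClosed ((Uᗮ ⊔ Vᗮ : Submodule 𝕜 E) : Set E) := by
  have hadj : (Uᗮ.orthogonalProjectionOnto ∘L V.subtypeL)† =
      V.orthogonalProjectionOnto ∘L Uᗮ.subtypeL := by
    rw [adjoint_comp, adjoint_orthogonalProjectionOnto, adjoint_subtypeL]
  calc IsClosed ((U ⊔ V : Submodule 𝕜 E) : Set E)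
      ↔ IsClosed (range (Uᗮ.orthogonalProjectionOnto ∘L V.subtypeL)) := by
        rw [← Uᗮ.isClosed_sup_orthogonal_iff_isClosed_range V, U.orthogonal_orthogonal, sup_comm]
    _ ↔ IsClosed (range (V.orthogonalProjectionOnto ∘L Uᗮ.subtypeL)) := by
        rw [← isClosed_range_adjoint_iff, hadj]
    _ ↔ _ := (V.isClosed_sup_orthogonal_iff_isClosed_range Uᗮ).symm

theorem Submodule.isClosed_map_iff_isClosed_map_orthogonal (f : E →L[𝕜] F) (g : E →L[𝕜] G)
    (hf : Surjective f) (hg : Surjective g)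
    (hfg : (LinearMap.ker (f : E →ₗ[𝕜] F))ᗮ = LinearMap.ker (g : E →ₗ[𝕜] G))
    (N : Submodule 𝕜 E) [CompleteSpace N] :
    IsClosed (N.map (f : E →ₗ[𝕜] F) : Set F) ↔ IsClosed (Nᗮ.map (g : E →ₗ[𝕜] G) : Set G) := by
  rw [f.isClosed_map_iff_isClosed_sup_ker hf, isClosed_sup_iff_isClosed_orthogonal_sup_orthogonal,
    hfg, g.isClosed_map_iff_isClosed_sup_ker hg]

end Orthogonal

namespace WithLp

section

variable {𝕜 E F : Type*} [RCLike 𝕜] [NormedAddCommGroup E] [InnerProductSpace 𝕜 E]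
  [NormedAddCommGroup F] [InnerProductSpace 𝕜 F]

theorem fstL_surjective : Surjective (fstL 2 𝕜 E F) := fun x => ⟨toLp 2 (x, 0), rfl⟩

theorem sndL_surjective : Surjective (sndL 2 𝕜 E F) := fun y => ⟨toLp 2 (0, y), rfl⟩

theorem orthogonal_ker_fstL :
    (LinearMap.ker (fstL 2 𝕜 E F : WithLp 2 (E × F) →ₗ[𝕜] E))ᗮ =
      LinearMap.ker (sndL 2 𝕜 E F : WithLp 2 (E × F) →ₗ[𝕜] F) := by
  ext x
  simp only [Submodule.mem_orthogonal', LinearMap.mem_ker, coe_coe, fstL_apply, sndL_apply,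
    prod_inner_apply, ofLp_fst, ofLp_snd]
  refine ⟨fun h => ?_, fun h u hu => by simp [h, hu]⟩
  simpa using h (toLp 2 (0, x.snd)) (by simp)

end

variable {𝕜 E F : Type*} [RCLike 𝕜] [NormedAddCommGroup E] [InnerProductSpace 𝕜 E]
  [CompleteSpace E] [NormedAddCommGroup F] [InnerProductSpace 𝕜 F] [CompleteSpace F]
  (N : Submodule 𝕜 (WithLp 2 (E × F))) [CompleteSpace N]

theorem isClosed_map_fstL_iff :
    IsClosed (N.map (fstL 2 𝕜 E F : WithLp 2 (E × F) →ₗ[𝕜] E) : Set E) ↔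
      IsClosed (Nᗮ.map (sndL 2 𝕜 E F : WithLp 2 (E × F) →ₗ[𝕜] F) : Set F) :=
  N.isClosed_map_iff_isClosed_map_orthogonal _ _ fstL_surjective sndL_surjective
    orthogonal_ker_fstL

theorem isClosed_map_sndL_iff :
    IsClosed (N.map (sndL 2 𝕜 E F : WithLp 2 (E × F) →ₗ[𝕜] F) : Set F) ↔
      IsClosed (Nᗮ.map (fstL 2 𝕜 E F : WithLp 2 (E × F) →ₗ[𝕜] E) : Set E) := by
  rw [isClosed_map_fstL_iff Nᗮ, N.orthogonal_orthogonal]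

end WithLp

open WithLp

section Relation

variable {E : Type*} [NormedAddCommGroup E] [InnerProductSpace ℂ E]

def toL2 (A : Submodule ℂ (E × E)) : Submodule ℂ (WithLp 2 (E × E)) :=
  A.comap (prodContinuousLinearEquiv 2 ℂ E E : WithLp 2 (E × E) →ₗ[ℂ] E × E)

theorem mem_toL2 {A : Submodule ℂ (E × E)} {x : WithLp 2 (E × E)} :
    x ∈ toL2 A ↔ ofLp x ∈ A :=
  Iff.rfl

theorem domRel_eq_map_fstL (A : Submodule ℂ (E × E)) :
    domRel (A : Set (E × E)) = (toL2 A).map (fstL 2 ℂ E E : WithLp 2 (E × E) →ₗ[ℂ] E) := by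
  ext f
  constructor
  · rintro ⟨g, hg⟩
    exact ⟨toLp 2 (f, g), hg, rfl⟩
  · rintro ⟨x, hx, rfl⟩
    exact ⟨x.snd, hx⟩

theorem ranRel_eq_map_sndL (A : Submodule ℂ (E × E)) :
    ranRel (A : Set (E × E)) = (toL2 A).map (sndL 2 ℂ E E : WithLp 2 (E × E) →ₗ[ℂ] E) := by
  ext g
  constructor
  · rintro ⟨f, hf⟩
    exact ⟨toLp 2 (f, g), hf, rfl⟩
  · rintro ⟨x, hx, rfl⟩
    exact ⟨x.fst, hx⟩

theorem mem_adjRel_iff (A : Submodule ℂ (E × E)) (f f' : E) :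
    (f, f') ∈ adjRel (A : Set (E × E)) ↔ toLp 2 (f', -f) ∈ (toL2 A)ᗮ := by
  simp only [adjRel, Submodule.mem_orthogonal', mem_toL2, prod_inner_apply, inner_neg_left,
    ← sub_eq_add_neg, sub_eq_zero, SetLike.mem_coe]
  exact ⟨fun h x hx => h _ hx, fun h q hq => h (toLp 2 q) hq⟩

theorem ranRel_adjRel_eq_map_fstL (A : Submodule ℂ (E × E)) :
    ranRel (adjRel (A : Set (E × E))) =
      (toL2 A)ᗮ.map (fstL 2 ℂ E E : WithLp 2 (E × E) →ₗ[ℂ] E) := by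
  ext f'
  constructor
  · rintro ⟨f, hf⟩
    exact ⟨_, (mem_adjRel_iff A f f').mp hf, rfl⟩
  · rintro ⟨x, hx, rfl⟩
    refine ⟨-x.snd, (mem_adjRel_iff A _ _).mpr ?_⟩
    rw [neg_neg]
    exact hx

theorem domRel_adjRel_eq_map_sndL (A : Submodule ℂ (E × E)) :
    domRel (adjRel (A : Set (E × E))) =
      (toL2 A)ᗮ.map (sndL 2 ℂ E E : WithLp 2 (E × E) →ₗ[ℂ] E) := by
  ext f
  constructor
  · rintro ⟨f', hf⟩
    exact ⟨-toLp 2 (f', -f), Submodule.neg_mem _ ((mem_adjRel_iff A f f').mp hf), by simp⟩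
  · rintro ⟨x, hx, rfl⟩
    exact ⟨-x.fst, (mem_adjRel_iff A _ _).mpr (Submodule.neg_mem _ hx)⟩

end Relation

/-- For a closed relation A: dom A is closed iff dom A* is closed, and
ran A is closed iff ran A* is closed. -/
theorem stmt10 (A : Submodule ℂ (H × H)) (hA : IsClosed (A : Set (H × H))) :
    (IsClosed (domRel (A : Set (H × H))) ↔ IsClosed (domRel (adjRel (A : Set (H × H))))) ∧
    (IsClosed (ranRel (A : Set (H × H))) ↔ IsClosed (ranRel (adjRel (A : Set (H × H))))) := by
  have : CompleteSpace (toL2 A) := (hA.preimage (prod_continuous_ofLp 2 H H)).completeSpace_coe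
  rw [domRel_eq_map_fstL, ranRel_eq_map_sndL, domRel_adjRel_eq_map_sndL, ranRel_adjRel_eq_map_fstL]
  exact ⟨isClosed_map_fstL_iff _, isClosed_map_sndL_iff _⟩
end

section
/- Let A be a linear relation in a Hilbert space H. Then the numerical range W(A) = {⟨f',f⟩ : (f,f') ∈ A, ‖f‖ = 1} is a convex subset of ℂ. -/
open scoped ComplexInnerProductSpace

variable {H : Type*} [NormedAddCommGroup H] [InnerProductSpace ℂ H] [CompleteSpace H]

/-!
After the change of relation `(u, v) ↦ (u, conj a • v + conj b • u)`, which maps the numerical range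
by `w ↦ a * w + b`, it suffices to show that `0, 1 ∈ W(S)` forces `[0, 1] ⊆ W(S)`. Let unit vectors
`(f, f')`, `(g, g')` realise `0` and `1`, and rotate the second pair by a unimodular `c` chosen so
that `⟪v, u⟫` stays real along the segment `(1 - s) • (f, f') + s • c • (g, g')` in `S`. As long as
`c • g ≠ -f` the first component never vanishes, so the Rayleigh quotient along the segment is a
continuous real function running from `0` to `1`; it hits every `t ∈ [0, 1]`, and normalising that
point of the segment exhibits `t ∈ W(S)`.
-/

open Set ComplexConjugate

section

variable {E : Type*} [NormedAddCommGroup E] [InnerProductSpace ℂ E]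

def scaleShift (a b : ℂ) : (E × E) →ₗ[ℂ] E × E :=
  (LinearMap.fst ℂ E E).prod (conj a • LinearMap.snd ℂ E E + conj b • LinearMap.fst ℂ E E)

@[simp]
lemma scaleShift_apply (a b : ℂ) (p : E × E) :
    scaleShift a b p = (p.1, conj a • p.2 + conj b • p.1) := rfl

lemma inner_scaleShift_of_norm_eq_one (a b : ℂ) {p : E × E} (hp : ‖p.1‖ = 1) :
    ⟪(scaleShift a b p).2, (scaleShift a b p).1⟫ = a * ⟪p.2, p.1⟫ + b := by
  simp [inner_self_eq_norm_sq_to_K, hp, mul_comm]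

lemma numRange_image_scaleShift (S : Set (E × E)) (a b : ℂ) :
    numRange (scaleShift a b '' S) = (fun w => a * w + b) '' numRange S := by
  ext z
  constructor
  · rintro ⟨_, ⟨p, hp, rfl⟩, hn, rfl⟩
    exact ⟨_, ⟨p, hp, hn, rfl⟩, (inner_scaleShift_of_norm_eq_one a b (p := p) hn).symm⟩
  · rintro ⟨_, ⟨p, hp, hn, rfl⟩, rfl⟩
    exact ⟨_, ⟨p, hp, rfl⟩, hn, (inner_scaleShift_of_norm_eq_one a b hn).symm⟩

noncomputable def rayleighQuotient (p : E × E) : ℂ := ⟪p.2, p.1⟫ / ((‖p.1‖ ^ 2 : ℝ) : ℂ)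

lemma rayleighQuotient_mem_numRange {S : Submodule ℂ (E × E)} {p : E × E} (hp : p ∈ S)
    (h : p.1 ≠ 0) :
    rayleighQuotient p ∈ numRange (S : Set (E × E)) := by
  refine ⟨(‖p.1‖⁻¹ : ℂ) • p, S.smul_mem _ hp, ?_, ?_⟩
  · simp [norm_smul, h]
  · simp only [rayleighQuotient, Prod.smul_fst, Prod.smul_snd, inner_smul_left, inner_smul_right,
      map_inv₀, Complex.conj_ofReal]
    field_simp
    push_cast
    ring

lemma exists_norm_eq_one_im_mul_eq_zero_smul_ne_neg (d : ℂ) {f g : E} (hf : f ≠ 0) :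
    ∃ c : ℂ, ‖c‖ = 1 ∧ (c * d).im = 0 ∧ c • g ≠ -f := by
  -- `-c` serves as well as `c`, and `c • g = -f` and `-c • g = -f` together would force `f = 0`.
  set c := Complex.exp (-d.arg * Complex.I)
  have hc : ‖c‖ = 1 := by simpa [c, neg_mul] using Complex.norm_exp_ofReal_mul_I (-d.arg)
  have hcd : c * d = ‖d‖ := by
    conv_lhs => rw [← Complex.norm_mul_exp_arg_mul_I d]
    rw [mul_left_comm, ← Complex.exp_add]
    simp
  by_cases hcg : c • g = -f
  · refine ⟨-c, by simpa using hc, by simp [neg_mul, hcd], fun h => hf ?_⟩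
    rw [neg_smul, hcg, neg_neg] at h
    have h2 : (2 : ℂ) • f = 0 := by rw [two_smul]; nth_rewrite 2 [h]; exact add_neg_cancel f
    exact (smul_eq_zero.1 h2).resolve_left two_ne_zero
  · exact ⟨c, hc, by simp [hcd], hcg⟩

lemma sub_smul_add_smul_ne_zero {F : Type*} [NormedAddCommGroup F] [NormedSpace ℝ F] {f g : F}
    (hfg : ‖f‖ = ‖g‖) (hne : g ≠ -f) (s : ℝ) : (1 - s) • f + s • g ≠ 0 := by
  intro h
  have hf : ‖f‖ ≠ 0 := by
    intro h0
    rw [h0, eq_comm, norm_eq_zero] at hfg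
    rw [norm_eq_zero] at h0
    simp [hfg, h0] at hne
  have hs : |1 - s| = |s| := by
    have := congrArg norm (eq_neg_of_add_eq_zero_left h)
    rw [norm_neg, norm_smul, norm_smul, ← hfg] at this
    simpa [hf] using this
  have hs : s = 1 / 2 := by
    rcases abs_eq_abs.1 hs with h | h <;> linarith
  subst hs
  norm_num at h
  exact hne (eq_neg_of_add_eq_zero_right (by simpa [← smul_add] using h))

lemma im_inner_sub_smul_add_smul_eq_zero {f f' g g' : E} {c : ℂ} (hf : ⟪f', f⟫.im = 0)
    (hg : ⟪g', g⟫.im = 0) (hc : (c * (⟪f', g⟫ - conj ⟪g', f⟫)).im = 0) (s : ℝ) :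
    ⟪(1 - s) • f' + s • c • g', (1 - s) • f + s • c • g⟫.im = 0 := by
  simp only [← Complex.coe_smul, inner_add_left, inner_add_right, inner_smul_left,
    inner_smul_right, Complex.conj_ofReal]
  simp only [Complex.mul_im, Complex.mul_re, Complex.add_im, Complex.add_re, Complex.sub_im,
    Complex.sub_re, Complex.ofReal_re, Complex.ofReal_im, Complex.conj_re, Complex.conj_im]
    at hf hg hc ⊢
  linear_combination (s * (1 - s)) * hc + (1 - s) ^ 2 * hf + s ^ 2 * (c.re ^ 2 + c.im ^ 2) * hg

lemma ofReal_mem_numRange_of_zero_mem_of_one_mem {S : Submodule ℂ (E × E)}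
    (h0 : (0 : ℂ) ∈ numRange (S : Set (E × E))) (h1 : (1 : ℂ) ∈ numRange (S : Set (E × E)))
    {t : ℝ} (ht : t ∈ Icc (0 : ℝ) 1) : (t : ℂ) ∈ numRange (S : Set (E × E)) := by
  obtain ⟨⟨f, f'⟩, hf, hnf, hvf⟩ := h0
  obtain ⟨⟨g, g'⟩, hg, hng, hvg⟩ := h1
  dsimp only at hnf hvf hng hvg
  have hf0 : f ≠ 0 := by rintro rfl; simp at hnf
  obtain ⟨c, hc, hcd, hcg⟩ :=
    exists_norm_eq_one_im_mul_eq_zero_smul_ne_neg (⟪f', g⟫ - conj ⟪g', f⟫) (g := g) hf0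
  set P : ℝ → E × E := fun s => (1 - s) • (f, f') + s • c • (g, g') with hP
  have hPS : ∀ s, P s ∈ S := fun s =>
    S.add_mem (S.smul_of_tower_mem _ hf) (S.smul_of_tower_mem _ (S.smul_mem _ hg))
  have hP0 : ∀ s, (P s).1 ≠ 0 := fun s =>
    sub_smul_add_smul_ne_zero (by rw [norm_smul, hc, hnf, hng, one_mul]) hcg s
  have him : ∀ s, (rayleighQuotient (P s)).im = 0 := fun s => by
    rw [rayleighQuotient, Complex.div_ofReal_im, div_eq_zero_iff]
    exact .inl (im_inner_sub_smul_add_smul_eq_zero (by simp [← hvf]) (by simp [← hvg]) hcd s)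
  have hcont : ContinuousOn (fun s => (rayleighQuotient (P s)).re) (Icc 0 1) := by
    refine Complex.continuous_re.comp_continuousOn (ContinuousOn.div ?_ ?_ fun s _ => ?_)
    · fun_prop
    · fun_prop
    · simpa using hP0 s
  have hend0 : (rayleighQuotient (P 0)).re = 0 := by simp [hP, rayleighQuotient, ← hvf]
  have hend1 : (rayleighQuotient (P 1)).re = 1 := by
    simp [hP, rayleighQuotient, ← hvg, norm_smul, hc, hng, Complex.mul_conj']
  obtain ⟨s, -, hs⟩ := intermediate_value_Icc zero_le_one hcont (by rwa [hend0, hend1])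
  convert rayleighQuotient_mem_numRange (hPS s) (hP0 s)
  exact Complex.ext hs.symm (him s).symm

end

/-- The numerical range of a linear relation is convex. -/
theorem stmt13 (A : Submodule ℂ (H × H)) :
    Convex ℝ (numRange (A : Set (H × H))) := by
  refine convex_iff_segment_subset.2 fun x hx y hy => ?_
  obtain rfl | hxy := eq_or_ne x y
  · simpa using hx
  rw [segment_eq_image']
  rintro _ ⟨θ, hθ, rfl⟩
  have hyx : y - x ≠ 0 := sub_ne_zero.2 hxy.symm
  set B := A.map (scaleShift (y - x)⁻¹ (-((y - x)⁻¹ * x)))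
  have hW : numRange (B : Set (H × H)) =
      (fun w => (y - x)⁻¹ * w + -((y - x)⁻¹ * x)) '' numRange (A : Set (H × H)) := by
    rw [Submodule.map_coe]
    exact numRange_image_scaleShift _ _ _
  have h0 : (0 : ℂ) ∈ numRange (B : Set (H × H)) := hW ▸ ⟨x, hx, by ring⟩
  have h1 : (1 : ℂ) ∈ numRange (B : Set (H × H)) := hW ▸ ⟨y, hy, by field_simp; ring⟩
  obtain ⟨w, hw, hwθ⟩ := hW ▸ ofReal_mem_numRange_of_zero_mem_of_one_mem h0 h1 hθ
  convert hw using 1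
  field_simp at hwθ
  show x + θ • (y - x) = w
  rw [Complex.real_smul]
  linear_combination -hwθ
end

section
/- Let A be a linear relation in a Hilbert space H, and let A_∞ = A ∔ ({0} × mul A*) (componentwise sum). Then the adjoint of A_∞ equals the restriction of A* to the closure of dom A: (A_∞)* = {(f,f') ∈ A* : f ∈ closure(dom A)}. In particular dom (A_∞)* = closure(dom A) ∩ dom A* and mul (A_∞)* = mul A*. -/
/-
Since `(0, v) ∈ A*` means exactly `v ⊥ dom A`, we have `mul A* = (dom A)ᗮ`. A pair is adjoint to
`A ∔ ({0} × M)` iff it is adjoint to `A` and its first component is orthogonal to `M`; for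
`M = (dom A)ᗮ` that orthogonality says `f ∈ (dom A)ᗮᗮ = closure (dom A)`.
-/

open scoped ComplexInnerProductSpace

variable {H : Type*} [NormedAddCommGroup H] [InnerProductSpace ℂ H] [CompleteSpace H]

section
variable {H : Type*}

lemma domRel_sep_fst_mem (S : Set (H × H)) (C : Set H) :
    domRel {p ∈ S | p.1 ∈ C} = C ∩ domRel S := by
  ext f
  exact ⟨fun ⟨g, hg, hf⟩ => ⟨hf, g, hg⟩, fun ⟨hf, g, hg⟩ => ⟨g, hg, hf⟩⟩

lemma mulRel_sep_fst_mem [NormedAddCommGroup H] (S : Set (H × H)) {C : Set H} (hC : (0 : H) ∈ C) :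
    mulRel {p ∈ S | p.1 ∈ C} = mulRel S := by
  ext g
  exact ⟨And.left, fun hg => ⟨hg, hC⟩⟩

end

section
variable {H : Type*} [NormedAddCommGroup H] [InnerProductSpace ℂ H]

lemma domRel_eq_map_fst (A : Submodule ℂ (H × H)) :
    domRel (A : Set (H × H)) = A.map (LinearMap.fst ℂ H H) := by
  ext f
  constructor
  · rintro ⟨g, hg⟩
    exact ⟨(f, g), hg, rfl⟩
  · rintro ⟨⟨f, g⟩, hfg, rfl⟩
    exact ⟨g, hfg⟩

lemma mem_mulRel_adjRel_iff (S : Set (H × H)) (v : H) :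
    v ∈ mulRel (adjRel S) ↔ ∀ q ∈ S, ⟪q.1, v⟫ = 0 := by
  simp only [mulRel, adjRel, Set.mem_ofPred_eq, inner_zero_left]
  refine forall₂_congr fun q _ => ?_
  rw [inner_eq_zero_symm]

lemma mulRel_adjRel_eq_orthogonal (A : Submodule ℂ (H × H)) :
    mulRel (adjRel (A : Set (H × H))) = ((A.map (LinearMap.fst ℂ H H))ᗮ : Set H) := by
  ext v
  simp [mem_mulRel_adjRel_iff, Submodule.mem_orthogonal]

lemma mem_closure_domRel_iff [CompleteSpace H] (A : Submodule ℂ (H × H)) (f : H) :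
    f ∈ closure (domRel (A : Set (H × H))) ↔
      ∀ v ∈ mulRel (adjRel (A : Set (H × H))), ⟪f, v⟫ = 0 := by
  rw [mulRel_adjRel_eq_orthogonal, domRel_eq_map_fst, ← Submodule.topologicalClosure_coe,
    ← Submodule.orthogonal_orthogonal_eq_closure, SetLike.mem_coe, Submodule.mem_orthogonal']
  rfl

lemma adjRel_add_zero_prod {S : Set (H × H)} (hS : 0 ∈ S) {M : Set H} (hM : 0 ∈ M) :
    adjRel {p | ∃ u ∈ S, ∃ v ∈ M, p = u + (0, v)} =
      {p ∈ adjRel S | ∀ v ∈ M, ⟪p.1, v⟫ = 0} := by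
  ext p
  constructor
  · intro hp
    refine ⟨fun u hu => hp u ⟨u, hu, 0, hM, by simp⟩, fun v hv => ?_⟩
    simpa [eq_comm] using hp (0, v) ⟨0, hS, v, hv, by simp⟩
  · rintro ⟨hpS, hpM⟩ _ ⟨u, hu, v, hv, rfl⟩
    simp [hpS u hu, hpM v hv]

end

/-- The adjoint of A_∞ = A ∔ ({0} × mul A*) is the restriction of A* to closure (dom A). -/
theorem stmt15 (A : Submodule ℂ (H × H)) (Ainf : Set (H × H))
    (hAinf : Ainf = {p | ∃ u ∈ (A : Set (H × H)),
        ∃ v ∈ mulRel (adjRel (A : Set (H × H))), p = u + (0, v)}) :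
    adjRel Ainf =
      {p ∈ adjRel (A : Set (H × H)) | p.1 ∈ closure (domRel (A : Set (H × H)))} ∧
    domRel (adjRel Ainf) =
      closure (domRel (A : Set (H × H))) ∩ domRel (adjRel (A : Set (H × H))) ∧
    mulRel (adjRel Ainf) = mulRel (adjRel (A : Set (H × H))) := by
  have hmul : (0 : H) ∈ mulRel (adjRel (A : Set (H × H))) :=
    (mem_mulRel_adjRel_iff _ _).2 fun _ _ => inner_zero_right _
  have hadj : adjRel Ainf =
      {p ∈ adjRel (A : Set (H × H)) | p.1 ∈ closure (domRel (A : Set (H × H)))} := by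
    rw [hAinf, adjRel_add_zero_prod A.zero_mem hmul]
    simp only [mem_closure_domRel_iff]
  have hdom : (0 : H) ∈ domRel (A : Set (H × H)) := ⟨0, A.zero_mem⟩
  refine ⟨hadj, ?_, ?_⟩
  · rw [hadj, domRel_sep_fst_mem]
  · rw [hadj, mulRel_sep_fst_mem _ (subset_closure hdom)]
end

section
/- Let A be a symmetric linear relation in a Hilbert space H which is domain tight (dom A = dom A*) and satisfies mul A* ⊆ mul A. Then A is selfadjoint, i.e., A = A*. -/
open scoped ComplexInnerProductSpace

variable {H : Type*} [NormedAddCommGroup H] [InnerProductSpace ℂ H] [CompleteSpace H]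

section

omit [CompleteSpace H]

theorem sub_mem_adjRel {S : Set (H × H)} {p q : H × H} (hp : p ∈ adjRel S) (hq : q ∈ adjRel S) :
    p - q ∈ adjRel S := by
  intro r hr
  simp only [Prod.fst_sub, Prod.snd_sub, inner_sub_left, hp r hr, hq r hr]

theorem sub_mem_mulRel_adjRel {S : Set (H × H)} {f g g' : H} (hg : (f, g) ∈ adjRel S)
    (hg' : (f, g') ∈ adjRel S) : g - g' ∈ mulRel (adjRel S) := by
  simpa [mulRel] using sub_mem_adjRel hg hg'

theorem Submodule.mk_mem_of_sub_mem_mulRel {A : Submodule ℂ (H × H)} {f g g' : H}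
    (hg' : (f, g') ∈ A) (hmul : g - g' ∈ mulRel (A : Set (H × H))) : (f, g) ∈ A := by
  simpa using A.add_mem hg' hmul

end

/-- A symmetric, domain tight relation with mul A* ⊆ mul A is selfadjoint. -/
theorem stmt16 (A : Submodule ℂ (H × H))
    (hsym : (A : Set (H × H)) ⊆ adjRel (A : Set (H × H)))
    (htight : domRel (A : Set (H × H)) = domRel (adjRel (A : Set (H × H))))
    (hmul : mulRel (adjRel (A : Set (H × H))) ⊆ mulRel (A : Set (H × H))) :
    (A : Set (H × H)) = adjRel (A : Set (H × H)) := by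
  refine hsym.antisymm fun ⟨f, g⟩ hfg => ?_
  obtain ⟨g', hg'⟩ : f ∈ domRel (A : Set (H × H)) := htight ▸ ⟨g, hfg⟩
  exact A.mk_mem_of_sub_mem_mulRel hg' (hmul (sub_mem_mulRel_adjRel hfg (hsym hg')))
end
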